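/- arXiv:1709.04011 — 3 statements merged into one kernel-verified Lean document; each statement's English description precedes it below -/
import Mathlib

section
/- Activation and deactivation are inverse: for contributors c and d of a bidirected graph G, d can be obtained by activating a circle of c if and only if c can be obtained by deactivating a circle of d. -/
open scoped Classical

/-- An oriented hypergraph on vertex set `V`: edges `E`, incidences `I`,
incidence function given by `vtx` and `edge`, and incidence orientations `sgn`. -/
structure OrientedHypergraph (V : Type) [Fintype V] [DecidableEq V] where
  E : Type
  I : Type
  [fintypeE : Fintype E]
  [fintypeI : Fintype I]
  [decEqI : DecidableEq I]
  vtx : I → V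
  edge : I → E
  sgn : I → ℤ

attribute [instance] OrientedHypergraph.fintypeE OrientedHypergraph.fintypeI
  OrientedHypergraph.decEqI

variable {V : Type} [Fintype V] [DecidableEq V]

/-- A bidirected graph: an oriented hypergraph in which every edge has exactly two
incidences, recorded by the fixed-point-free involution `τ` pairing the two
incidences of each edge. -/
structure Bidirected (V : Type) [Fintype V] [DecidableEq V]
    extends OrientedHypergraph V where
  τ : I → I
  τ_invol : ∀ i, τ (τ i) = i
  τ_ne : ∀ i, τ i ≠ i
  τ_edge : ∀ i, edge (τ i) = edge i
  edge_two : ∀ i j, edge i = edge j → j = i ∨ j = τ i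

/-- A pre-contributor: an incidence-preserving map of `|V|` disjoint directed paths
of length one into `G`, sending the tail `t_v` to `v`.  The component at `v` is the
weak walk with tail incidence `i1 v` and head incidence `i2 v`. -/
structure PreContributor (G : OrientedHypergraph V) where
  i1 : V → G.I
  i2 : V → G.I
  tail_eq : ∀ v, G.vtx (i1 v) = v
  edge_eq : ∀ v, G.edge (i1 v) = G.edge (i2 v)

namespace PreContributor

variable {G : OrientedHypergraph V}

/-- The head vertex of the component of `p` at `v`: `p(h_v)`. -/
def head (p : PreContributor G) (v : V) : V := G.vtx (p.i2 v)

/-- A contributor: a pre-contributor whose heads cover `V`, `{p(h_v) | v ∈ V} = V`. -/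
def IsContributor (p : PreContributor G) : Prop := Function.Surjective p.head

/-- The component of `p` at `v` is a backstep `(v,i,e,i,v)`. -/
def BackstepAt (p : PreContributor G) (v : V) : Prop := p.i2 v = p.i1 v

/-- The sign of the length-one weak walk of `p` at `v`. -/
def walkSign (p : PreContributor G) (v : V) : ℤ := -(G.sgn (p.i1 v) * G.sgn (p.i2 v))

/-- Two vertices lie in the same component of the image of `p`. -/
def compRel (p : PreContributor G) : V → V → Prop :=
  Relation.EqvGen (fun v w => p.head v = w)

/-- The setoid of components of `p`. -/
def compSetoid (p : PreContributor G) : Setoid V := Relation.EqvGen.setoid (fun v w => p.head v = w)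

/-- A component class is a (lone) backstep. -/
def IsBackstepClass (p : PreContributor G) (q : Quotient p.compSetoid) : Prop :=
  ∃ v, Quotient.mk p.compSetoid v = q ∧ p.head v = v ∧ p.BackstepAt v

/-- The number of vertices in a component class. -/
noncomputable def compCard (p : PreContributor G) (q : Quotient p.compSetoid) : ℕ :=
  Nat.card {v : V // Quotient.mk p.compSetoid v = q}

/-- The sign of a component class: the product of the signs of its weak walks. -/
noncomputable def compSign (p : PreContributor G) (q : Quotient p.compSetoid) : ℤ :=
  ∏ᶠ v ∈ {v : V | Quotient.mk p.compSetoid v = q}, p.walkSign v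

/-- `tc`: total number of circles of a contributor (backsteps do not count). -/
noncomputable def tc (p : PreContributor G) : ℕ :=
  Nat.card {q : Quotient p.compSetoid // ¬ p.IsBackstepClass q}

/-- `pc`: number of positive circles of a contributor. -/
noncomputable def pc (p : PreContributor G) : ℕ :=
  Nat.card {q : Quotient p.compSetoid // ¬ p.IsBackstepClass q ∧ p.compSign q = 1}

/-- `nc`: number of negative circles of a contributor. -/
noncomputable def nc (p : PreContributor G) : ℕ :=
  Nat.card {q : Quotient p.compSetoid // ¬ p.IsBackstepClass q ∧ p.compSign q = -1}

/-- `oc`: number of odd circles of a contributor. -/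
noncomputable def oc (p : PreContributor G) : ℕ :=
  Nat.card {q : Quotient p.compSetoid // ¬ p.IsBackstepClass q ∧ Odd (p.compCard q)}

/-- `ec`: number of even circles of a contributor. -/
noncomputable def ec (p : PreContributor G) : ℕ :=
  Nat.card {q : Quotient p.compSetoid // ¬ p.IsBackstepClass q ∧ Even (p.compCard q)}

end PreContributor

/-- The `V × E` incidence matrix of an oriented hypergraph. -/
noncomputable def OrientedHypergraph.inc (G : OrientedHypergraph V) : Matrix V G.E ℤ :=
  fun v e => ∑ᶠ i ∈ {i : G.I | G.vtx i = v ∧ G.edge i = e}, G.sgn i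

/-- The oriented hypergraphic Laplacian `L_G = H_G H_Gᵀ`. -/
noncomputable def OrientedHypergraph.lap (G : OrientedHypergraph V) : Matrix V V ℤ :=
  G.inc * G.inc.transpose

namespace Bidirected

variable {G : Bidirected V}

/-- Packing the directed adjacency of `p` at `v` into a backstep. -/
def pack (G : Bidirected V) (p : PreContributor G.toOrientedHypergraph) (v : V) :
    PreContributor G.toOrientedHypergraph where
  i1 := p.i1
  i2 := fun u => if u = v then p.i1 v else p.i2 u
  tail_eq := p.tail_eq
  edge_eq := fun u => by by_cases h : u = v <;> simp [h, p.edge_eq u]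

/-- Unpacking the backstep of `p` at `v` into the unique directed adjacency out of
`v` completing the edge. -/
def unpack (G : Bidirected V) (p : PreContributor G.toOrientedHypergraph) (v : V) :
    PreContributor G.toOrientedHypergraph where
  i1 := p.i1
  i2 := fun u => if u = v then G.τ (p.i1 v) else p.i2 u
  tail_eq := p.tail_eq
  edge_eq := fun u => by
    by_cases h : u = v
    · simp [h, G.τ_edge]
    · simp [h, p.edge_eq u]

end Bidirected
namespace Bidirected

variable {V : Type} [Fintype V] [DecidableEq V]

/-- A sequence of vertices is a valid sequence of unpackings from `p`:
each step unpacks a backstep. -/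
def UnpackSeqOK (G : Bidirected V) :
    PreContributor G.toOrientedHypergraph → List V → Prop
  | _, [] => True
  | p, v :: l => p.BackstepAt v ∧ UnpackSeqOK G (G.unpack p v) l

/-- A sequence of vertices is a valid sequence of packings from `p`:
each step packs a directed adjacency. -/
def PackSeqOK (G : Bidirected V) :
    PreContributor G.toOrientedHypergraph → List V → Prop
  | _, [] => True
  | p, v :: l => ¬ p.BackstepAt v ∧ PackSeqOK G (G.pack p v) l

/-- `d` is obtained from `c` by activating a circle: a minimal sequence of
unpackings producing a new contributor, which has one more circle. -/
def Activates (G : Bidirected V) (c d : PreContributor G.toOrientedHypergraph) : Prop :=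
  c.IsContributor ∧ d.IsContributor ∧
    ∃ l : List V, G.UnpackSeqOK c l ∧ List.foldl G.unpack c l = d ∧
      d.tc = c.tc + 1 ∧
      ∀ l' : List V, l' <+: l → l' ≠ [] → l' ≠ l →
        ¬ (List.foldl G.unpack c l').IsContributor

/-- `d` is obtained from `c` by deactivating a circle: a minimal sequence of
packings producing a new contributor, which has one fewer circle. -/
def Deactivates (G : Bidirected V) (c d : PreContributor G.toOrientedHypergraph) : Prop :=
  c.IsContributor ∧ d.IsContributor ∧
    ∃ l : List V, G.PackSeqOK c l ∧ List.foldl G.pack c l = d ∧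
      c.tc = d.tc + 1 ∧
      ∀ l' : List V, l' <+: l → l' ≠ [] → l' ≠ l →
        ¬ (List.foldl G.pack c l').IsContributor

/-- The activation partial order `≤_a`. -/
def leA (G : Bidirected V) : PreContributor G.toOrientedHypergraph →
    PreContributor G.toOrientedHypergraph → Prop :=
  Relation.ReflTransGen G.Activates

/-- Activation equivalence `~_a`; its classes are the activation classes. -/
def ActEq (G : Bidirected V) (c d : PreContributor G.toOrientedHypergraph) : Prop :=
  G.leA c d ∨ G.leA d c

/-- Two vertices are linked by an edge of `G`. -/
def linkR (G : Bidirected V) (v w : V) : Prop :=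
  ∃ i : G.I, G.vtx i = v ∧ G.vtx (G.τ i) = w

/-- Every connected component of `G` contains at least one adjacency
(an edge whose two incidences lie at two distinct vertices). -/
def EveryComponentHasAdjacency (G : Bidirected V) : Prop :=
  ∀ v : V, ∃ w : V, Relation.EqvGen G.linkR v w ∧
    ∃ i : G.I, G.vtx i = w ∧ G.vtx (G.τ i) ≠ w

end Bidirected

namespace Bidirected

variable {V : Type} [Fintype V] [DecidableEq V] {G : Bidirected V}

lemma precontrib_ext {p q : PreContributor G.toOrientedHypergraph}
    (h1 : p.i1 = q.i1) (h2 : p.i2 = q.i2) : p = q := by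
  cases p; cases q; cases h1; cases h2; rfl

lemma pack_unpack (p : PreContributor G.toOrientedHypergraph) (v : V)
    (h : p.BackstepAt v) : G.pack (G.unpack p v) v = p := by
  refine precontrib_ext rfl ?_
  funext u
  by_cases hu : u = v
  · subst hu; simp [Bidirected.pack, Bidirected.unpack]; exact h.symm
  · simp [Bidirected.pack, Bidirected.unpack, hu]

lemma i2_eq_tau (p : PreContributor G.toOrientedHypergraph) (v : V)
    (h : ¬ p.BackstepAt v) : p.i2 v = G.τ (p.i1 v) := by
  rcases G.edge_two (p.i1 v) (p.i2 v) (p.edge_eq v) with h' | h'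
  · exact absurd h' h
  · exact h'

lemma unpack_pack (p : PreContributor G.toOrientedHypergraph) (v : V)
    (h : ¬ p.BackstepAt v) : G.unpack (G.pack p v) v = p := by
  refine precontrib_ext rfl ?_
  funext u
  by_cases hu : u = v
  · subst hu; simp [Bidirected.pack, Bidirected.unpack, (i2_eq_tau p u h).symm]
  · simp [Bidirected.pack, Bidirected.unpack, hu]

lemma not_backstep_unpack (p : PreContributor G.toOrientedHypergraph) (v : V) :
    ¬ (G.unpack p v).BackstepAt v := by
  simp only [PreContributor.BackstepAt, Bidirected.unpack, if_pos rfl]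
  exact G.τ_ne _

lemma backstep_pack (p : PreContributor G.toOrientedHypergraph) (v : V) :
    (G.pack p v).BackstepAt v := by
  simp [PreContributor.BackstepAt, Bidirected.pack]

lemma unpackSeqOK_append : ∀ (l₁ l₂ : List V) (p : PreContributor G.toOrientedHypergraph),
    G.UnpackSeqOK p (l₁ ++ l₂) ↔
      G.UnpackSeqOK p l₁ ∧ G.UnpackSeqOK (List.foldl G.unpack p l₁) l₂ := by
  intro l₁
  induction l₁ with
  | nil => intro l₂ p; simp [Bidirected.UnpackSeqOK]
  | cons v l ih =>
    intro l₂ p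
    simp only [List.cons_append, Bidirected.UnpackSeqOK, List.append_eq, ih, List.foldl_cons]
    tauto

lemma packSeqOK_append : ∀ (l₁ l₂ : List V) (p : PreContributor G.toOrientedHypergraph),
    G.PackSeqOK p (l₁ ++ l₂) ↔
      G.PackSeqOK p l₁ ∧ G.PackSeqOK (List.foldl G.pack p l₁) l₂ := by
  intro l₁
  induction l₁ with
  | nil => intro l₂ p; simp [Bidirected.PackSeqOK]
  | cons v l ih =>
    intro l₂ p
    simp only [List.cons_append, Bidirected.PackSeqOK, List.append_eq, ih, List.foldl_cons]
    tauto

lemma packSeq_of_unpackSeq : ∀ (l : List V) (c : PreContributor G.toOrientedHypergraph),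
    G.UnpackSeqOK c l →
      G.PackSeqOK (List.foldl G.unpack c l) l.reverse ∧
      List.foldl G.pack (List.foldl G.unpack c l) l.reverse = c := by
  intro l
  induction l with
  | nil => intro c _; exact ⟨trivial, rfl⟩
  | cons v l ih =>
    intro c hok
    obtain ⟨hb, hok'⟩ := hok
    obtain ⟨ih1, ih2⟩ := ih (G.unpack c v) hok'
    simp only [List.foldl_cons, List.reverse_cons]
    constructor
    · rw [packSeqOK_append]
      refine ⟨ih1, ?_, trivial⟩
      rw [ih2]
      exact not_backstep_unpack c v
    · rw [List.foldl_append, ih2]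
      simp only [List.foldl_cons, List.foldl_nil]
      exact pack_unpack c v hb

lemma unpackSeq_of_packSeq : ∀ (l : List V) (c : PreContributor G.toOrientedHypergraph),
    G.PackSeqOK c l →
      G.UnpackSeqOK (List.foldl G.pack c l) l.reverse ∧
      List.foldl G.unpack (List.foldl G.pack c l) l.reverse = c := by
  intro l
  induction l with
  | nil => intro c _; exact ⟨trivial, rfl⟩
  | cons v l ih =>
    intro c hok
    obtain ⟨hb, hok'⟩ := hok
    obtain ⟨ih1, ih2⟩ := ih (G.pack c v) hok'
    simp only [List.foldl_cons, List.reverse_cons]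
    constructor
    · rw [unpackSeqOK_append]
      refine ⟨ih1, ?_, trivial⟩
      rw [ih2]
      exact backstep_pack c v
    · rw [List.foldl_append, ih2]
      simp only [List.foldl_cons, List.foldl_nil]
      exact unpack_pack c v hb

end Bidirected

/-- Activation and deactivation are inverse: for contributors `c` and
`d` of a bidirected graph `G`, `d` can be obtained by activating a circle of `c`
if and only if `c` can be obtained by deactivating a circle of `d`. -/
theorem activates_iff_deactivates {V : Type} [Fintype V] [DecidableEq V]
    (G : Bidirected V) (c d : PreContributor G.toOrientedHypergraph) :
    G.Activates c d ↔ G.Deactivates d c := by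
  constructor
  · rintro ⟨hc, hd, l, hok, hfold, htc, hmin⟩
    refine ⟨hd, hc, l.reverse, ?_, ?_, htc, ?_⟩
    · rw [← hfold]; exact (Bidirected.packSeq_of_unpackSeq l c hok).1
    · rw [← hfold]; exact (Bidirected.packSeq_of_unpackSeq l c hok).2
    · rintro l' ⟨s, hs⟩ hne hnall
      have hl : l = s.reverse ++ l'.reverse := by
        rw [← List.reverse_append, hs, List.reverse_reverse]
      have hsplit := (Bidirected.unpackSeqOK_append s.reverse l'.reverse c).1 (hl ▸ hok)
      have hmid := Bidirected.packSeq_of_unpackSeq l'.reverse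
        (List.foldl G.unpack c s.reverse) hsplit.2
      have hd' : List.foldl G.unpack (List.foldl G.unpack c s.reverse) l'.reverse = d := by
        rw [← List.foldl_append, ← hl, hfold]
      rw [hd', List.reverse_reverse] at hmid
      rw [hmid.2]
      apply hmin s.reverse ⟨l'.reverse, hl.symm⟩
      · intro h
        apply hnall
        have hs0 : s = [] := by simpa using h
        rw [← hs, hs0, List.append_nil]
      · intro h
        rw [h] at hl
        apply hne
        have hlen := congrArg List.length hl
        simp only [List.length_append, List.length_reverse] at hlen
        have hz : l'.length = 0 := by omega
        exact List.length_eq_zero_iff.mp hz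
  · rintro ⟨hd, hc, l, hok, hfold, htc, hmin⟩
    refine ⟨hc, hd, l.reverse, ?_, ?_, htc, ?_⟩
    · rw [← hfold]; exact (Bidirected.unpackSeq_of_packSeq l d hok).1
    · rw [← hfold]; exact (Bidirected.unpackSeq_of_packSeq l d hok).2
    · rintro l' ⟨s, hs⟩ hne hnall
      have hl : l = s.reverse ++ l'.reverse := by
        rw [← List.reverse_append, hs, List.reverse_reverse]
      have hsplit := (Bidirected.packSeqOK_append s.reverse l'.reverse d).1 (hl ▸ hok)
      have hmid := Bidirected.unpackSeq_of_packSeq l'.reverse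
        (List.foldl G.pack d s.reverse) hsplit.2
      have hd' : List.foldl G.pack (List.foldl G.pack d s.reverse) l'.reverse = c := by
        rw [← List.foldl_append, ← hl, hfold]
      rw [hd', List.reverse_reverse] at hmid
      rw [hmid.2]
      apply hmin s.reverse ⟨l'.reverse, hl.symm⟩
      · intro h
        apply hnall
        have hs0 : s = [] := by simpa using h
        rw [← hs, hs0, List.append_nil]
      · intro h
        rw [h] at hl
        apply hne
        have hlen := congrArg List.length hl
        simp only [List.length_append, List.length_reverse] at hlen
        have hz : l'.length = 0 := by omega
        exact List.length_eq_zero_iff.mp hz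
end

section
/- The minimal elements of the activation classes of a bidirected graph are pairwise incomparable in the activation order, consist only of backsteps, and correspond to the identity permutation on the vertex set. -/
open scoped Classical

variable {V : Type} [Fintype V] [DecidableEq V]

/-!
If a contributor `c` has a non-backstep component, say at `v`, then, `c.head` being a permutation,
that component is a cycle of `c.head` containing no backstep. Packing all of its vertices gives a
contributor with one circle fewer; packing a proper nonempty part of it leaves a vertex of the cycle
uncovered, so no shorter packing sequence gives a contributor. Hence `c` can be deactivated, and a
contributor admitting no deactivation consists of backsteps.

An activation unpacks backsteps; packing the same vertices again in reverse order undoes it and is a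
deactivation. So if `c <_a d`, the last activation step into `d` yields a deactivation of `d`.
-/

open Function Set

section FunctionGraph

variable {α : Type*} {f g : α → α} {S : Set α} {u x : α}

theorem Relation.EqvGen.mem_iff_of_apply_mem_iff (hS : ∀ a, f a ∈ S ↔ a ∈ S)
    (h : Relation.EqvGen (fun a b => f a = b) u x) : u ∈ S ↔ x ∈ S := by
  induction h with
  | rel a b hab => rw [← hab, hS]
  | refl => rfl
  | symm _ _ _ ih => exact ih.symm
  | trans _ _ _ _ _ ih₁ ih₂ => exact ih₁.trans ih₂

theorem Relation.EqvGen.of_apply_eq_self_or_apply_eq (hg : ∀ a, g a = a ∨ g a = f a)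
    (h : Relation.EqvGen (fun a b => g a = b) u x) :
    Relation.EqvGen (fun a b => f a = b) u x := by
  induction h with
  | rel a b hab =>
    rcases hg a with hga | hga
    · rw [← hab, hga]
      exact .refl a
    · exact .rel a b (hga ▸ hab)
  | refl a => exact .refl a
  | symm a b _ ih => exact .symm a b ih
  | trans a b c _ _ ih₁ ih₂ => exact .trans a b c ih₁ ih₂

theorem eqvGen_apply_eq_iff_of_mem (hS : ∀ a, f a ∈ S ↔ a ∈ S) (hgS : ∀ a ∈ S, g a = a)
    (hgSc : ∀ a ∉ S, g a = f a) (hu : u ∈ S) :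
    Relation.EqvGen (fun a b => g a = b) u x ↔ x = u := by
  refine ⟨fun h => ?_, by rintro rfl; exact .refl x⟩
  have hsingleton : ∀ a, g a ∈ ({u} : Set α) ↔ a ∈ ({u} : Set α) := by
    intro a
    by_cases ha : a ∈ S
    · rw [hgS a ha]
    · rw [hgSc a ha]
      exact iff_of_false (fun h => (hS a).not.2 ha (h ▸ hu)) (fun h => ha (h ▸ hu))
  exact (h.mem_iff_of_apply_mem_iff hsingleton).1 rfl

theorem eqvGen_apply_eq_iff_of_notMem (hS : ∀ a, f a ∈ S ↔ a ∈ S) (hgS : ∀ a ∈ S, g a = a)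
    (hgSc : ∀ a ∉ S, g a = f a) (hu : u ∉ S) :
    Relation.EqvGen (fun a b => g a = b) u x ↔ Relation.EqvGen (fun a b => f a = b) u x := by
  refine ⟨.of_apply_eq_self_or_apply_eq fun a => ?_, fun h => ?_⟩
  · by_cases ha : a ∈ S
    exacts [.inl (hgS a ha), .inr (hgSc a ha)]
  induction h with
  | rel a b hab => exact .rel a b ((hgSc a hu).trans hab)
  | refl a => exact .refl a
  | symm a b hab ih => exact .symm _ _ (ih ((hab.mem_iff_of_apply_mem_iff hS).not.2 hu))
  | trans a b c hab _ ih₁ ih₂ =>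
    exact .trans _ _ _ (ih₁ hu) (ih₂ ((hab.mem_iff_of_apply_mem_iff hS).not.1 hu))

theorem surjective_iff_mapsTo_of_eqOn (hf : Bijective f) (hgS : ∀ a ∈ S, g a = a)
    (hgSc : ∀ a ∉ S, g a = f a) : Surjective g ↔ MapsTo f S S := by
  constructor
  · intro hg a ha
    obtain ⟨y, hy⟩ := hg (f a)
    by_cases hyS : y ∈ S
    · rwa [← hy, hgS y hyS]
    · rw [hgSc y hyS] at hy
      exact absurd (hf.1 hy ▸ ha) hyS
  · intro hmaps w
    by_cases hw : w ∈ S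
    · exact ⟨w, hgS w hw⟩
    · obtain ⟨y, rfl⟩ := hf.2 w
      exact ⟨y, hgSc y fun hy => hw (hmaps hy)⟩

theorem Set.MapsTo.apply_mem_iff_of_injective (h : MapsTo f S S) (hS : S.Finite)
    (hf : Injective f) (a : α) : f a ∈ S ↔ a ∈ S := by
  refine ⟨fun ha => ?_, fun ha => h ha⟩
  obtain ⟨b, hb, hba⟩ := ((hS.injOn_iff_bijOn_of_mapsTo h).1 hf.injOn).surjOn ha
  exact hf hba ▸ hb

end FunctionGraph

namespace PreContributor

variable {G : OrientedHypergraph V} {p : PreContributor G} {u v w : V}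

theorem ext {q : PreContributor G} (h1 : p.i1 = q.i1) (h2 : p.i2 = q.i2) : p = q := by
  cases p; cases q; cases h1; cases h2; rfl

theorem head_eq_of_backstepAt (h : p.BackstepAt v) : p.head v = v := by
  rw [head, h, p.tail_eq]

theorem compRel_head_right_iff : p.compRel v (p.head u) ↔ p.compRel v u :=
  have hu : p.compRel u (p.head u) := .rel _ _ rfl
  ⟨fun h => .trans _ _ _ h (.symm _ _ hu), fun h => .trans _ _ _ h hu⟩

theorem mk_eq_mk_iff :
    Quotient.mk p.compSetoid u = Quotient.mk p.compSetoid w ↔ p.compRel u w :=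
  ⟨Quotient.exact, fun h => Quotient.sound h⟩

theorem isBackstepClass_mk_iff :
    p.IsBackstepClass (Quotient.mk p.compSetoid u) ↔ ∃ w, p.compRel w u ∧ p.BackstepAt w := by
  simp only [IsBackstepClass, mk_eq_mk_iff]
  exact ⟨fun ⟨w, hwu, _, hw⟩ => ⟨w, hwu, hw⟩,
    fun ⟨w, hwu, hw⟩ => ⟨w, hwu, head_eq_of_backstepAt hw, hw⟩⟩

theorem tc_eq_ncard : p.tc = {q | ¬ p.IsBackstepClass q}.ncard :=
  Nat.card_coe_set_eq _

theorem IsContributor.bijective (hp : p.IsContributor) : Bijective p.head :=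
  ⟨Finite.injective_iff_surjective.2 hp, hp⟩

/-- A backstep is a fixed point of the injective map `p.head`, so it is alone in its component. -/
theorem not_backstepAt_of_compRel (hinj : Injective p.head) (hv : ¬ p.BackstepAt v)
    (h : p.compRel v u) : ¬ p.BackstepAt u := by
  intro hu
  have hfix : ∀ a, p.head a ∈ ({u} : Set V) ↔ a ∈ ({u} : Set V) := fun a =>
    ⟨fun ha => hinj (ha.trans (head_eq_of_backstepAt hu).symm),
      by rintro rfl; exact head_eq_of_backstepAt hu⟩
  have hvu : v = u := (Relation.EqvGen.mem_iff_of_apply_mem_iff hfix h).2 rfl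
  exact hv (hvu ▸ hu)

theorem not_isBackstepClass_mk (hinj : Injective p.head) (hv : ¬ p.BackstepAt v) :
    ¬ p.IsBackstepClass (Quotient.mk p.compSetoid v) := by
  rintro ⟨w, hwv, -, hw⟩
  exact not_backstepAt_of_compRel hinj hv (.symm _ _ (mk_eq_mk_iff.1 hwv)) hw

end PreContributor

namespace Bidirected

open PreContributor

variable {G : Bidirected V} {p : PreContributor G.toOrientedHypergraph} {l : List V} {a u : V}

theorem pack_backstepAt_iff : (G.pack p a).BackstepAt u ↔ u = a ∨ p.BackstepAt u := by
  by_cases h : u = a <;> simp [BackstepAt, pack, h]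

theorem unpack_backstepAt_iff : (G.unpack p a).BackstepAt u ↔ u ≠ a ∧ p.BackstepAt u := by
  by_cases h : u = a <;> simp [BackstepAt, unpack, h, G.τ_ne]

theorem foldl_pack_i1 : (l.foldl G.pack p).i1 = p.i1 := by
  induction l generalizing p with
  | nil => rfl
  | cons b l ih => exact ih

theorem foldl_pack_i2 :
    (l.foldl G.pack p).i2 u = if u ∈ l then p.i1 u else p.i2 u := by
  induction l generalizing p with
  | nil => simp
  | cons b l ih =>
    rw [List.foldl_cons, ih]
    by_cases h : u = b <;> simp [h, pack]

theorem foldl_pack_head_of_mem (hu : u ∈ l) : (l.foldl G.pack p).head u = u := by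
  simp [head, foldl_pack_i2, hu, p.tail_eq]

theorem foldl_pack_head_of_notMem (hu : u ∉ l) : (l.foldl G.pack p).head u = p.head u := by
  simp [head, foldl_pack_i2, hu]

theorem foldl_unpack_i1 : (l.foldl G.unpack p).i1 = p.i1 := by
  induction l generalizing p with
  | nil => rfl
  | cons b l ih => exact ih

theorem foldl_unpack_i2 :
    (l.foldl G.unpack p).i2 u = if u ∈ l then G.τ (p.i1 u) else p.i2 u := by
  induction l generalizing p with
  | nil => simp
  | cons b l ih =>
    rw [List.foldl_cons, ih]
    by_cases h : u = b <;> simp [h, unpack]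

theorem packSeqOK_of_nodup :
    ∀ {p : PreContributor G.toOrientedHypergraph} {l : List V},
      l.Nodup → (∀ u ∈ l, ¬ p.BackstepAt u) → G.PackSeqOK p l
  | _, [], _, _ => trivial
  | _, a :: l, hnd, hbs => by
    refine ⟨hbs a List.mem_cons_self, packSeqOK_of_nodup hnd.of_cons fun u hu => ?_⟩
    rw [pack_backstepAt_iff, not_or]
    exact ⟨fun h => (List.nodup_cons.1 hnd).1 (h ▸ hu), hbs u (.tail a hu)⟩

theorem UnpackSeqOK.backstepAt :
    ∀ {p : PreContributor G.toOrientedHypergraph} {l : List V},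
      G.UnpackSeqOK p l → ∀ u ∈ l, p.BackstepAt u
  | _, [], _ => by simp
  | _, _ :: _, ⟨ha, hl⟩ =>
    List.forall_mem_cons.2 ⟨ha, fun u hu => (unpack_backstepAt_iff.1 (hl.backstepAt u hu)).2⟩

theorem UnpackSeqOK.nodup :
    ∀ {p : PreContributor G.toOrientedHypergraph} {l : List V}, G.UnpackSeqOK p l → l.Nodup
  | _, [], _ => List.nodup_nil
  | _, a :: _, ⟨_, hl⟩ =>
    List.nodup_cons.2 ⟨fun ha => (unpack_backstepAt_iff.1 (hl.backstepAt a ha)).1 rfl, hl.nodup⟩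

theorem foldl_pack_foldl_unpack {m k : List V} (hbs : ∀ u ∈ l, p.BackstepAt u)
    (hm : ∀ u ∈ m, u ∈ l) (hk : ∀ u, u ∈ k ↔ u ∈ l ∧ u ∉ m) :
    m.foldl G.pack (l.foldl G.unpack p) = k.foldl G.unpack p := by
  refine PreContributor.ext (by rw [foldl_pack_i1, foldl_unpack_i1, foldl_unpack_i1]) ?_
  funext u
  rw [foldl_pack_i2, foldl_unpack_i1, foldl_unpack_i2, foldl_unpack_i2]
  by_cases hum : u ∈ m
  · simp [hum, hk, (hbs u (hm u hum)).symm]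
  · by_cases hul : u ∈ l <;> simp [hum, hul, hk]

theorem Activates.deactivates {c d : PreContributor G.toOrientedHypergraph}
    (h : G.Activates c d) : G.Deactivates d c := by
  obtain ⟨hc, hd, l, hok, rfl, htc, hmin⟩ := h
  have hbs := hok.backstepAt
  have hnd := hok.nodup
  refine ⟨hd, hc, l.reverse, packSeqOK_of_nodup (List.nodup_reverse.2 hnd) fun u hu => ?_,
    foldl_pack_foldl_unpack (k := []) hbs (fun u => List.mem_reverse.1) (by simp), htc, ?_⟩
  · simp [BackstepAt, foldl_unpack_i2, foldl_unpack_i1, List.mem_reverse.1 hu, G.τ_ne]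
  -- packing back a prefix `l'` of `l.reverse` leaves `c` unpacked along the rest of `l`,
  -- a prefix of `l`
  rintro l' ⟨t, ht⟩ hl'0 hl'l
  have hl : l = t.reverse ++ l'.reverse := by
    rw [← List.reverse_append, ht, List.reverse_reverse]
  have hdisj := List.disjoint_of_nodup_append (hl ▸ hnd)
  rw [foldl_pack_foldl_unpack hbs (k := t.reverse)
    (fun u hu => hl ▸ List.mem_append_right _ (List.mem_reverse.2 hu))]
  · refine hmin t.reverse ⟨l'.reverse, hl.symm⟩ (fun ht0 => hl'l ?_) (fun htl => hl'0 ?_)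
    · simpa [List.reverse_eq_nil_iff.1 ht0] using ht
    · simpa [← htl] using hl
  · intro u
    rw [hl]
    simp only [List.mem_append, List.mem_reverse]
    exact ⟨fun hu => ⟨.inl hu, fun hu' => hdisj (List.mem_reverse.2 hu)
      (List.mem_reverse.2 hu')⟩, fun ⟨hu, hu'⟩ => hu.resolve_right hu'⟩

theorem isContributor_foldl_pack_iff (hp : p.IsContributor) :
    (l.foldl G.pack p).IsContributor ↔ MapsTo p.head {u | u ∈ l} {u | u ∈ l} :=
  surjective_iff_mapsTo_of_eqOn hp.bijective (fun _ => foldl_pack_head_of_mem)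
    (fun _ => foldl_pack_head_of_notMem)

section PackComponent

variable {c : PreContributor G.toOrientedHypergraph} {v x : V}

theorem head_mem_iff_of_forall_mem_iff (hl : ∀ u, u ∈ l ↔ c.compRel v u) (u : V) :
    c.head u ∈ l ↔ u ∈ l := by
  rw [hl, hl, compRel_head_right_iff]

theorem foldl_pack_compRel_iff_of_mem (hl : ∀ u, u ∈ l ↔ c.compRel v u) (hu : u ∈ l) :
    (l.foldl G.pack c).compRel u x ↔ x = u :=
  eqvGen_apply_eq_iff_of_mem (S := {u | u ∈ l}) (head_mem_iff_of_forall_mem_iff hl)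
    (fun _ => foldl_pack_head_of_mem) (fun _ => foldl_pack_head_of_notMem) hu

theorem foldl_pack_compRel_iff_of_notMem (hl : ∀ u, u ∈ l ↔ c.compRel v u) (hu : u ∉ l) :
    (l.foldl G.pack c).compRel u x ↔ c.compRel u x :=
  eqvGen_apply_eq_iff_of_notMem (S := {u | u ∈ l}) (head_mem_iff_of_forall_mem_iff hl)
    (fun _ => foldl_pack_head_of_mem) (fun _ => foldl_pack_head_of_notMem) hu

theorem foldl_pack_compRel_imp (hl : ∀ u, u ∈ l ↔ c.compRel v u)
    (h : (l.foldl G.pack c).compRel u x) : c.compRel u x := by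
  by_cases hu : u ∈ l
  · rw [(foldl_pack_compRel_iff_of_mem hl hu).1 h]
    exact .refl u
  · exact (foldl_pack_compRel_iff_of_notMem hl hu).1 h

theorem foldl_pack_isBackstepClass_of_mem (hu : u ∈ l) :
    (l.foldl G.pack c).IsBackstepClass (Quotient.mk _ u) :=
  ⟨u, rfl, foldl_pack_head_of_mem hu, by simp [BackstepAt, foldl_pack_i2, foldl_pack_i1, hu]⟩

theorem foldl_pack_isBackstepClass_iff_of_notMem (hl : ∀ u, u ∈ l ↔ c.compRel v u)
    (hu : u ∉ l) : (l.foldl G.pack c).IsBackstepClass (Quotient.mk _ u) ↔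
      c.IsBackstepClass (Quotient.mk _ u) := by
  simp only [isBackstepClass_mk_iff]
  refine exists_congr fun w => ?_
  by_cases hw : w ∈ l
  · refine iff_of_false (fun h => hu ?_) (fun h => hu ?_)
    · exact (foldl_pack_compRel_iff_of_mem hl hw).1 h.1 ▸ hw
    · exact (hl u).2 (.trans _ _ _ ((hl w).1 hw) h.1)
  · rw [foldl_pack_compRel_iff_of_notMem hl hw]
    simp [BackstepAt, foldl_pack_i2, foldl_pack_i1, hw]

/-- Packing a whole circle of `c` turns it into backsteps and leaves the other components alone. -/
theorem tc_eq_tc_foldl_pack_add_one (hinj : Injective c.head) (hv : ¬ c.BackstepAt v)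
    (hl : ∀ u, u ∈ l ↔ c.compRel v u) : c.tc = (l.foldl G.pack c).tc + 1 := by
  set d := l.foldl G.pack c
  let Φ : Quotient d.compSetoid → Quotient c.compSetoid :=
    Quotient.map id fun _ _ h => foldl_pack_compRel_imp hl h
  have hmem_of_mk_eq : ∀ {a}, Quotient.mk c.compSetoid a = Quotient.mk _ v → a ∈ l :=
    fun h => (hl _).2 (.symm _ _ (mk_eq_mk_iff.1 h))
  have hinjOn : InjOn Φ {q | ¬ d.IsBackstepClass q} := by
    rintro ⟨a⟩ ha ⟨b⟩ - hab
    have ha' : a ∉ l := fun h => ha (foldl_pack_isBackstepClass_of_mem h)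
    exact mk_eq_mk_iff.2 ((foldl_pack_compRel_iff_of_notMem hl ha').2 (mk_eq_mk_iff.1 hab))
  have hv_notMem : Quotient.mk _ v ∉ Φ '' {q | ¬ d.IsBackstepClass q} := by
    rintro ⟨⟨a⟩, ha, hav⟩
    exact ha (foldl_pack_isBackstepClass_of_mem (hmem_of_mk_eq hav))
  have hclasses : {q | ¬ c.IsBackstepClass q} =
      insert (Quotient.mk _ v) (Φ '' {q | ¬ d.IsBackstepClass q}) := by
    ext q
    induction q using Quotient.inductionOn with | h u => ?_
    by_cases hu : u ∈ l
    · have huv : Quotient.mk c.compSetoid u = Quotient.mk _ v :=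
        mk_eq_mk_iff.2 (.symm _ _ ((hl u).1 hu))
      exact iff_of_true (huv ▸ not_isBackstepClass_mk hinj hv) (.inl huv)
    · rw [mem_ofPred_eq, ← foldl_pack_isBackstepClass_iff_of_notMem hl hu, mem_insert_iff,
        or_iff_right fun h => hu (hmem_of_mk_eq h)]
      refine ⟨fun h => ⟨_, h, rfl⟩, ?_⟩
      rintro ⟨⟨w⟩, hw, hwu⟩
      have hw' : w ∉ l := fun h => hw (foldl_pack_isBackstepClass_of_mem h)
      rwa [← mk_eq_mk_iff.2 ((foldl_pack_compRel_iff_of_notMem hl hw').2 (mk_eq_mk_iff.1 hwu))]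
  rw [tc_eq_ncard, tc_eq_ncard, hclasses, ncard_insert_of_notMem hv_notMem, hinjOn.ncard_image]

end PackComponent

theorem mem_of_compRel_of_isContributor_foldl_pack (hp : p.IsContributor)
    (hl : (l.foldl G.pack p).IsContributor) {w : V} (hw : w ∈ l) (h : p.compRel w u) : u ∈ l :=
  have hmaps := (isContributor_foldl_pack_iff hp).1 hl
  (Relation.EqvGen.mem_iff_of_apply_mem_iff
    (hmaps.apply_mem_iff_of_injective (List.finite_toSet l) hp.bijective.1) h).1 hw

theorem exists_deactivates_of_not_backstepAt {c : PreContributor G.toOrientedHypergraph}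
    (hc : c.IsContributor) {v : V} (hv : ¬ c.BackstepAt v) : ∃ d, G.Deactivates c d := by
  set l := (Finset.univ.filter (c.compRel v)).toList
  have hl : ∀ u, u ∈ l ↔ c.compRel v u := by simp [l]
  have hnd : l.Nodup := Finset.nodup_toList _
  have hinj := hc.bijective.1
  have hd : (l.foldl G.pack c).IsContributor :=
    (isContributor_foldl_pack_iff hc).2 fun u => (head_mem_iff_of_forall_mem_iff hl u).2
  have hok : G.PackSeqOK c l :=
    packSeqOK_of_nodup hnd fun u hu => not_backstepAt_of_compRel hinj hv ((hl u).1 hu)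
  refine ⟨_, hc, hd, l, hok, rfl, tc_eq_tc_foldl_pack_add_one hinj hv hl,
    fun l' hpre hl'0 hl'l hl' => hl'l ?_⟩
  obtain ⟨w, hw⟩ := List.exists_mem_of_ne_nil l' hl'0
  have hvw : c.compRel w v := .symm _ _ ((hl w).1 (hpre.subset hw))
  have hsub : l ⊆ l' := fun u hu =>
    mem_of_compRel_of_isContributor_foldl_pack hc hl' hw (.trans _ _ _ hvw ((hl u).1 hu))
  exact hpre.sublist.eq_of_length_le (List.subperm_of_subset hnd hsub).length_le

end Bidirected

/-- The minimal elements of the activation classes of a bidirected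
graph consist only of backsteps (hence correspond to the identity permutation of
the vertices), and distinct minimal elements are incomparable in the activation
order. -/
theorem minimal_contributors {V : Type} [Fintype V] [DecidableEq V]
    (G : Bidirected V) :
    (∀ c : PreContributor G.toOrientedHypergraph, c.IsContributor →
      (¬ ∃ d, G.Deactivates c d) →
      (∀ v, c.BackstepAt v) ∧ (∀ v, c.head v = v)) ∧
    (∀ c d : PreContributor G.toOrientedHypergraph, c.IsContributor → d.IsContributor →
      (¬ ∃ c', G.Deactivates c c') → (¬ ∃ d', G.Deactivates d d') →
      c ≠ d → ¬ G.leA c d) := by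
  refine ⟨fun c hc hmin => ?_, fun c d _ _ _ hdmin hne hle => ?_⟩
  · have hbs : ∀ v, c.BackstepAt v := fun v =>
      not_not.1 fun hv => hmin (Bidirected.exists_deactivates_of_not_backstepAt hc hv)
    exact ⟨hbs, fun v => PreContributor.head_eq_of_backstepAt (hbs v)⟩
  · rcases hle.cases_tail with rfl | ⟨e, -, hact⟩
    · exact hne rfl
    · exact hdmin ⟨e, hact.deactivates⟩
end

section
/- For an oriented hypergraph G with Laplacian L_G, perm(L_G) = ∑_{c ∈ C(G)} (−1)^{oc(c)+nc(c)} and det(L_G) = ∑_{c ∈ C(G)} (−1)^{pc(c)}, where C(G) is the set of contributors of G, and oc(c), nc(c), pc(c) are the numbers of odd, negative, and positive circles in the image of c respectively. -/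
open scoped Classical

variable {V : Type} [Fintype V] [DecidableEq V]

/-!
Expanding `L_G = H_G H_Gᵀ`, the term `∏ v, L_G v (π v)` of the permanent and of the determinant
is the sum, over the pre-contributors `c` with head map `π`, of the product of all incidence
signs used by `c`. A weak walk of length one has sign `-σ(i)σ(j)`, so this product is
`∏ q, (-1)^|q| · sign q` over the components `q` of `c`. A backstep has one walk and sign `-1`
and contributes `1`, which leaves `(-1)^(oc + nc)`. The components are also the cycles of `π`, so
`sign π = ∏ q, -(-1)^|q|`, and in the determinant each component contributes `-sign q`: `1` for a
backstep or a negative circle and `-1` for a positive circle.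
-/

open Finset

theorem Finset.prod_eq_neg_one_pow_card_filter {ι M : Type*} [CommMonoid M] [HasDistribNeg M]
    [DecidableEq M] {s : Finset ι} {f : ι → M} (hf : ∀ a ∈ s, f a = 1 ∨ f a = -1) :
    ∏ a ∈ s, f a = (-1) ^ #{a ∈ s | f a = -1} := by
  rw [← prod_filter_mul_prod_filter_not s (fun a => f a = -1),
    prod_congr rfl fun a ha => (mem_filter.1 ha).2, prod_const, prod_eq_one, mul_one]
  intro a ha
  obtain ⟨has, hne⟩ := mem_filter.1 ha
  exact (hf a has).resolve_right hne

namespace Equiv.Perm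

variable {α : Type*}

theorem eqvGen_apply_eq_iff_sameCycle [Finite α] (σ : Perm α) {x y : α} :
    Relation.EqvGen (fun a b => σ a = b) x y ↔ σ.SameCycle x y := by
  constructor
  · intro h
    induction h with
    | rel a b hab => exact ⟨1, by simpa using hab⟩
    | refl a => exact .refl σ a
    | symm _ _ _ ih => exact ih.symm
    | trans _ _ _ _ _ ih₁ ih₂ => exact ih₁.trans ih₂
  · intro h
    obtain ⟨n, -, -, rfl⟩ := h.exists_nat_pow_eq
    clear h
    induction n with
    | zero => exact .refl x
    | succ n ih => exact .trans _ _ _ ih (.rel _ _ (by rw [pow_succ', mul_apply]))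

variable [Fintype α]

theorem card_filter_mk_eq_of_apply_eq (σ : Perm α) {x : α} (hx : σ x = x) :
    #{y | (⟦y⟧ : Quotient (SameCycle.setoid σ)) = ⟦x⟧} = 1 := by
  refine card_eq_one.2 ⟨x, ?_⟩
  ext y
  simp only [mem_filter, mem_univ, true_and, mem_singleton, Quotient.eq]
  exact ⟨fun h => h.eq_of_right hx, fun h => h ▸ .rfl⟩

variable [DecidableEq α]

theorem card_filter_mk_eq_of_apply_ne (σ : Perm α) {x : α} (hx : σ x ≠ x) :
    #{y | (⟦y⟧ : Quotient (SameCycle.setoid σ)) = ⟦x⟧} = #(σ.cycleOf x).support := by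
  congr 1
  ext y
  rw [mem_filter, mem_support_cycleOf_iff, Quotient.eq, mem_support, sameCycle_comm]
  exact ⟨fun h => ⟨h.2, hx⟩, fun h => ⟨mem_univ y, h.1⟩⟩

theorem sign_eq_prod_quotient (σ : Perm α) (s : Setoid α)
    (hs : ∀ x y, s x y ↔ σ.SameCycle x y) :
    (sign σ : ℤ) = ∏ q : Quotient s, -(-1) ^ #{x | (⟦x⟧ : Quotient s) = q} := by
  obtain rfl : s = SameCycle.setoid σ := Setoid.ext hs
  have hcycles : (sign σ : ℤ) = ∏ d ∈ σ.cycleFactorsFinset, -(-1) ^ #d.support := by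
    rw [sign_of_cycleType', cycleType_def]
    simp
  have hmoved : ∀ q : Quotient (SameCycle.setoid σ),
      -(-1) ^ #{x | (⟦x⟧ : Quotient (SameCycle.setoid σ)) = q} ≠ (1 : ℤ) →
        σ q.out ≠ q.out := by
    intro q hq hfix
    rw [← q.out_eq, card_filter_mk_eq_of_apply_eq σ hfix] at hq
    simp at hq
  rw [hcycles, eq_comm]
  refine prod_bij_ne_one (fun q _ _ => σ.cycleOf q.out) ?_ ?_ ?_ ?_
  · intro q _ hq
    exact cycleOf_mem_cycleFactorsFinset_iff.2 (mem_support.2 (hmoved q hq))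
  · intro q₁ _ _ q₂ _ hq₂ h
    have hmem : q₂.out ∈ (σ.cycleOf q₁.out).support := by
      rw [h, mem_support_cycleOf_iff, mem_support]
      exact ⟨.rfl, hmoved q₂ hq₂⟩
    exact Quotient.out_equiv_out.1 (mem_support_cycleOf_iff.1 hmem).1
  · intro d hd hd₁
    obtain ⟨x, hx, -⟩ := (mem_cycleFactorsFinset_iff.1 hd).1
    have hxd : x ∈ d.support := mem_support.2 hx
    obtain rfl := cycle_is_cycleOf hxd hd
    have hσx : σ x ≠ x := by rwa [← (mem_cycleFactorsFinset_iff.1 hd).2 x hxd]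
    refine ⟨⟦x⟧, mem_univ _, ?_, ?_⟩
    · rwa [card_filter_mk_eq_of_apply_ne σ hσx]
    · exact (Quotient.mk_out (s := SameCycle.setoid σ) x).cycleOf_eq
  · intro q _ hq
    conv_lhs => rw [← q.out_eq, card_filter_mk_eq_of_apply_ne σ (hmoved q hq)]

end Equiv.Perm

namespace OrientedHypergraph

variable {V : Type} [Fintype V] [DecidableEq V] (G : OrientedHypergraph V)

/-- The weak walks of length one from `u` to `w`. -/
abbrev Step (u w : V) : Type :=
  {p : G.I × G.I // G.vtx p.1 = u ∧ G.vtx p.2 = w ∧ G.edge p.1 = G.edge p.2}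

theorem inc_apply (v : V) (e : G.E) :
    G.inc v e = ∑ i with G.vtx i = v ∧ G.edge i = e, G.sgn i := by
  rw [inc, ← finsum_mem_coe_finset, coe_filter]
  simp only [mem_univ, true_and]

theorem lap_apply (u w : V) : G.lap u w = ∑ p : G.Step u w, G.sgn p.1.1 * G.sgn p.1.2 := by
  rw [eq_comm, ← sum_subtype _ (fun x => mem_filter_univ x)
    (fun p : G.I × G.I => G.sgn p.1 * G.sgn p.2),
    ← sum_fiberwise_of_maps_to (g := fun p => G.edge p.1) (t := univ) (fun _ _ => mem_univ _),
    lap, Matrix.mul_apply]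
  refine sum_congr rfl fun e _ => ?_
  rw [Matrix.transpose_apply, inc_apply, inc_apply, sum_mul_sum, ← sum_product']
  refine sum_congr ?_ fun _ _ => rfl
  ext ⟨i, j⟩
  simp only [mem_product, mem_filter, mem_univ, true_and]
  grind

end OrientedHypergraph

namespace PreContributor

open Equiv

variable {V : Type} [Fintype V] [DecidableEq V] {G : OrientedHypergraph V}

noncomputable instance : Fintype (PreContributor G) :=
  Fintype.ofInjective (fun c => (c.i1, c.i2)) <| by
    rintro ⟨_, _, _, _⟩ ⟨_, _, _, _⟩ h
    cases h
    rfl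

def weight (c : PreContributor G) : ℤ := ∏ v, G.sgn (c.i1 v) * G.sgn (c.i2 v)

def equivPiStep (f : V → V) : {c : PreContributor G // c.head = f} ≃ ∀ v, G.Step v (f v) where
  toFun c v := ⟨(c.1.i1 v, c.1.i2 v), c.1.tail_eq v, congrFun c.2 v, c.1.edge_eq v⟩
  invFun x := ⟨⟨fun v => (x v).1.1, fun v => (x v).1.2, fun v => (x v).2.1,
    fun v => (x v).2.2.2⟩, funext fun v => (x v).2.2.1⟩
  left_inv _ := rfl
  right_inv _ := rfl

theorem prod_lap_apply (f : V → V) :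
    ∏ v, G.lap v (f v) = ∑ c : PreContributor G with c.head = f, c.weight := by
  simp_rw [OrientedHypergraph.lap_apply, Fintype.prod_sum]
  rw [sum_subtype _ (fun c => mem_filter_univ c), ← (equivPiStep f).symm.sum_comp]
  rfl

theorem isContributor_iff_exists_perm (c : PreContributor G) :
    c.IsContributor ↔ ∃ π : Perm V, c.head = π :=
  ⟨fun hc => ⟨ofBijective _ (Finite.surjective_iff_bijective.1 hc), rfl⟩,
    fun ⟨π, hπ⟩ => by rw [IsContributor, hπ]; exact π.surjective⟩

theorem sum_perm_sum_head_eq {M : Type*} [AddCommMonoid M] (g : PreContributor G → M) :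
    ∑ π : Perm V, ∑ c : PreContributor G with c.head = ⇑π, g c =
      ∑ c with c.IsContributor, g c := by
  rw [← sum_biUnion]
  · congr 1
    ext c
    simp [isContributor_iff_exists_perm]
  · intro π₁ _ π₂ _ hne
    refine disjoint_filter.2 fun c _ h₁ h₂ => hne ?_
    exact DFunLike.coe_injective (h₁.symm.trans h₂)

section Components

variable (c : PreContributor G)

theorem compCard_eq (q : Quotient c.compSetoid) : c.compCard q = #{v | ⟦v⟧ = q} := by
  rw [compCard, Nat.card_eq_fintype_card, Fintype.card_subtype]

theorem compSign_eq (q : Quotient c.compSetoid) :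
    c.compSign q = ∏ v with ⟦v⟧ = q, c.walkSign v := by
  rw [compSign, ← finprod_mem_coe_finset, coe_filter]
  simp only [mem_univ, true_and]

theorem weight_eq_prod_components :
    c.weight = ∏ q : Quotient c.compSetoid, (-1) ^ c.compCard q * c.compSign q := by
  have hstep : ∀ v, G.sgn (c.i1 v) * G.sgn (c.i2 v) = -1 * c.walkSign v := fun v => by
    rw [walkSign]; ring
  rw [weight, ← prod_fiberwise univ (fun v => (⟦v⟧ : Quotient c.compSetoid))]
  refine prod_congr rfl fun q _ => ?_
  rw [compCard_eq, compSign_eq, ← prod_const, ← prod_mul_distrib]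
  exact prod_congr rfl fun v _ => hstep v

theorem compSign_eq_one_or_neg_one (hsgn : ∀ i, G.sgn i = 1 ∨ G.sgn i = -1)
    (q : Quotient c.compSetoid) : c.compSign q = 1 ∨ c.compSign q = -1 := by
  rw [compSign_eq, ← Int.isUnit_iff]
  refine IsUnit.prod_iff.2 fun v _ => ?_
  exact ((Int.isUnit_iff.2 (hsgn _)).mul (Int.isUnit_iff.2 (hsgn _))).neg

variable {c} {π : Perm V}

theorem compSetoid_iff_sameCycle (h : c.head = π) (u v : V) :
    c.compSetoid u v ↔ π.SameCycle u v := by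
  rw [← π.eqvGen_apply_eq_iff_sameCycle, ← h]
  rfl

theorem sign_eq_prod_components (h : c.head = π) :
    (Perm.sign π : ℤ) = ∏ q : Quotient c.compSetoid, -(-1) ^ c.compCard q := by
  simp_rw [compCard_eq]
  exact π.sign_eq_prod_quotient c.compSetoid (compSetoid_iff_sameCycle h)

theorem filter_mk_eq_singleton (h : c.head = π) {v : V} (hv : c.head v = v) :
    univ.filter (fun u => (⟦u⟧ : Quotient c.compSetoid) = ⟦v⟧) = {v} := by
  ext u
  simp only [mem_filter, mem_univ, true_and, mem_singleton, Quotient.eq,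
    compSetoid_iff_sameCycle h]
  exact ⟨fun hu => hu.eq_of_right (h ▸ hv), fun hu => hu ▸ .rfl⟩

theorem compCard_eq_one_of_isBackstepClass (h : c.head = π) {q : Quotient c.compSetoid}
    (hq : c.IsBackstepClass q) : c.compCard q = 1 := by
  obtain ⟨v, rfl, hv, -⟩ := hq
  rw [compCard_eq, filter_mk_eq_singleton h hv, card_singleton]

theorem compSign_eq_neg_one_of_isBackstepClass (hsgn : ∀ i, G.sgn i = 1 ∨ G.sgn i = -1)
    (h : c.head = π) {q : Quotient c.compSetoid} (hq : c.IsBackstepClass q) :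
    c.compSign q = -1 := by
  obtain ⟨v, rfl, hv, hback⟩ := hq
  rw [compSign_eq, filter_mk_eq_singleton h hv, prod_singleton, walkSign, hback]
  rcases hsgn (c.i1 v) with hs | hs <;> simp [hs]

theorem weight_eq_neg_one_pow (hsgn : ∀ i, G.sgn i = 1 ∨ G.sgn i = -1) (h : c.head = π) :
    c.weight = (-1) ^ (oc c + nc c) := by
  have hcircles :
      ∀ q ∈ univ, (-1) ^ c.compCard q * c.compSign q ≠ 1 → ¬ c.IsBackstepClass q := by
    intro q _ hne hq
    simp [compCard_eq_one_of_isBackstepClass h hq,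
      compSign_eq_neg_one_of_isBackstepClass hsgn h hq] at hne
  rw [weight_eq_prod_components, ← prod_filter_of_ne hcircles, prod_mul_distrib,
    prod_eq_neg_one_pow_card_filter fun q _ => neg_one_pow_eq_or ℤ _,
    prod_eq_neg_one_pow_card_filter fun q _ => compSign_eq_one_or_neg_one c hsgn q, pow_add]
  simp [oc, nc, Nat.card_eq_fintype_card, Fintype.card_subtype, filter_filter,
    neg_one_pow_eq_neg_one_iff_odd]

theorem sign_mul_weight_eq_neg_one_pow (hsgn : ∀ i, G.sgn i = 1 ∨ G.sgn i = -1)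
    (h : c.head = π) : (Perm.sign π : ℤ) * c.weight = (-1) ^ pc c := by
  have hfactor : ∀ q, -(-1) ^ c.compCard q * ((-1) ^ c.compCard q * c.compSign q) =
      -c.compSign q := fun q => by
    rw [neg_mul, ← mul_assoc, ← mul_pow]
    norm_num
  have hcircles : ∀ q ∈ univ, -c.compSign q ≠ 1 → ¬ c.IsBackstepClass q := by
    intro q _ hne hq
    simp [compSign_eq_neg_one_of_isBackstepClass hsgn h hq] at hne
  have hneg : ∀ q ∈ univ.filter (¬ c.IsBackstepClass ·),
      -c.compSign q = 1 ∨ -c.compSign q = -1 := fun q _ =>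
    (compSign_eq_one_or_neg_one c hsgn q).symm.imp neg_eq_iff_eq_neg.2 neg_eq_iff_eq_neg.2
  rw [sign_eq_prod_components h, weight_eq_prod_components, ← prod_mul_distrib]
  simp_rw [hfactor]
  rw [← prod_filter_of_ne hcircles, prod_eq_neg_one_pow_card_filter hneg]
  simp [pc, Nat.card_eq_fintype_card, Fintype.card_subtype, filter_filter]

end Components

end PreContributor

open PreContributor in
/-- For an oriented hypergraph `G` with Laplacian `L_G`,
`perm(L_G) = ∑_{c ∈ C(G)} (−1)^{oc(c)+nc(c)}` and
`det(L_G) = ∑_{c ∈ C(G)} (−1)^{pc(c)}`, where `C(G)` is the set of contributors of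
`G` and `oc`, `nc`, `pc` count odd, negative, and positive circles of `c`. -/
theorem lap_perm_det_contributors {V : Type} [Fintype V] [DecidableEq V]
    (G : OrientedHypergraph V) (hsgn : ∀ i, G.sgn i = 1 ∨ G.sgn i = -1) :
    G.lap.permanent =
      (∑ᶠ c ∈ {c : PreContributor G | c.IsContributor}, (-1 : ℤ) ^ (oc c + nc c)) ∧
    G.lap.det =
      (∑ᶠ c ∈ {c : PreContributor G | c.IsContributor}, (-1 : ℤ) ^ pc c) := by
  have hcontributors : {c : PreContributor G | c.IsContributor} =
      ↑(univ.filter fun c : PreContributor G => c.IsContributor) := by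
    simp
  rw [hcontributors, finsum_mem_coe_finset, finsum_mem_coe_finset, ← sum_perm_sum_head_eq,
    ← sum_perm_sum_head_eq, ← Matrix.permanent_transpose, ← Matrix.det_transpose,
    Matrix.permanent, Matrix.det_apply']
  simp only [Matrix.transpose_apply, prod_lap_apply, mul_sum]
  refine ⟨sum_congr rfl fun π _ => sum_congr rfl fun c hc => ?_,
    sum_congr rfl fun π _ => sum_congr rfl fun c hc => ?_⟩
  · exact weight_eq_neg_one_pow hsgn (mem_filter.1 hc).2
  · exact sign_mul_weight_eq_neg_one_pow hsgn (mem_filter.1 hc).2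
end
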